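/- q-deformed continued fraction formula for right q-rationals: let q > 0 and let a = (a₁, …, a₂ₙ) be a positive even continued form (a₁ ≥ 0 and aᵢ ≥ 1 for 2 ≤ i ≤ 2n). Writing [m]_q := 1 + q + ⋯ + q^{m−1}, define y₂ₙ := [a₂ₙ]_{q⁻¹} and, for k = 2n−1 down to 1, y_k := [a_k]_q + q^{a_k}/y_{k+1} if k is odd, and y_k := [a_k]_{q⁻¹} + q^{−a_k}/y_{k+1} if k is even. Then y_k > 0 for all 2 ≤ k ≤ 2n, the (2,1) entry of β(a, q) is positive, and the image of ∞ under the Möbius transformation of β(a, q) (i.e., the ratio of the (1,1) entry to the (2,1) entry) equals y₁. -/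
import Mathlib


open Matrix Filter

/-- The q-deformed generator σ₁(q) = [[q⁻¹, −q⁻¹], [0, 1]]. -/
noncomputable def sig1 (q : ℝ) : Matrix (Fin 2) (Fin 2) ℝ := !![q⁻¹, -q⁻¹; 0, 1]

/-- The q-deformed generator σ₂(q) = [[1, 0], [1, q⁻¹]]. -/
noncomputable def sig2 (q : ℝ) : Matrix (Fin 2) (Fin 2) ℝ := !![1, 0; 1, q⁻¹]

/-- `betaMat q a k` is the product of the first `k` alternating factors
`σ₁(q)^{-a 1} · σ₂(q)^{a 2} · σ₁(q)^{-a 3} ⋯` (indices start at 1). -/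
noncomputable def betaMat (q : ℝ) (a : ℕ → ℤ) : ℕ → Matrix (Fin 2) (Fin 2) ℝ
  | 0 => 1
  | k + 1 => betaMat q a k *
      (if (k + 1) % 2 = 1 then sig1 q ^ (-(a (k + 1))) else sig2 q ^ (a (k + 1)))

/-- Möbius action of a 2×2 real matrix on a real number: z ↦ (Az + B)/(Cz + D). -/
noncomputable def mobiusAct (M : Matrix (Fin 2) (Fin 2) ℝ) (z : ℝ) : ℝ :=
  (M 0 0 * z + M 0 1) / (M 1 0 * z + M 1 1)

/-- Möbius image of ∞ under a 2×2 real matrix: ∞ ↦ A/C. -/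
noncomputable def mobiusInf (M : Matrix (Fin 2) (Fin 2) ℝ) : ℝ := M 0 0 / M 1 0

/-- `a` (on indices 1,…,2n) is an even continued form: either `a₁ ≥ 0` and `aᵢ ≥ 1` for
`2 ≤ i ≤ 2n`, or `a₁ ≤ 0` and `aᵢ ≤ −1` for `2 ≤ i ≤ 2n`. -/
def IsEvenForm (n : ℕ) (a : ℕ → ℤ) : Prop :=
  1 ≤ n ∧ ((0 ≤ a 1 ∧ ∀ i, 2 ≤ i → i ≤ 2 * n → 1 ≤ a i)
    ∨ (a 1 ≤ 0 ∧ ∀ i, 2 ≤ i → i ≤ 2 * n → a i ≤ -1))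

/-- Value of the continued fraction `a i + 1/(a (i+1) + 1/(⋯ + 1/(a last)))`. -/
def cfVal (a : ℕ → ℤ) (last i : ℕ) : ℚ :=
  if last ≤ i then (a i : ℚ)
  else (a i : ℚ) + 1 / cfVal a last (i + 1)
termination_by last - i
decreasing_by omega

/-- `a` (on indices 1,…,2n) is the even continued fraction expansion of the rational `x`:
for `x ≠ 0` it is an even continued form of value `x`; by convention the expansion of `0`
is `(−1, 1)`. -/
def IsECFExp (n : ℕ) (a : ℕ → ℤ) (x : ℚ) : Prop :=
  (x ≠ 0 ∧ IsEvenForm n a ∧ cfVal a (2 * n) 1 = x) ∨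
  (x = 0 ∧ n = 1 ∧ a 1 = -1 ∧ a 2 = 1)

/-- The right q-deformation attached to expansion data `(n, a)`:
the image of ∞ under the Möbius transformation of β(a, q). -/
noncomputable def sharpVal (q : ℝ) (n : ℕ) (a : ℕ → ℤ) : ℝ :=
  mobiusInf (betaMat q a (2 * n))

/-- The left q-deformation attached to expansion data `(n, a)`:
the image of 1/(1−q) under the Möbius transformation of β(a, q). -/
noncomputable def flatVal (q : ℝ) (n : ℕ) (a : ℕ → ℤ) : ℝ :=
  mobiusAct (betaMat q a (2 * n)) (1 / (1 - q))

/-- The q-integer [m]_q = 1 + q + ⋯ + q^{m−1} (for m ≥ 0). -/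
noncomputable def qInt (q : ℝ) (m : ℤ) : ℝ := ∑ i ∈ Finset.range m.toNat, q ^ i

/-- The backwards recursion for the q-deformed continued fraction:
`ySharp q a last k` is y_k, where y_last = [a_last]_{q⁻¹} and
y_k = [a_k]_q + q^{a_k}/y_{k+1} for k odd, y_k = [a_k]_{q⁻¹} + q^{−a_k}/y_{k+1} for k even. -/
noncomputable def ySharp (q : ℝ) (a : ℕ → ℤ) (last k : ℕ) : ℝ :=
  if last ≤ k then qInt q⁻¹ (a k)
  else if k % 2 = 1 then qInt q (a k) + q ^ (a k) / ySharp q a last (k + 1)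
  else qInt q⁻¹ (a k) + q ^ (-(a k)) / ySharp q a last (k + 1)
termination_by last - k
decreasing_by all_goals omega

namespace SharpAux

/-- The `k`-th factor of the beta matrix product. -/
noncomputable def fac (q : ℝ) (a : ℕ → ℤ) (k : ℕ) : Matrix (Fin 2) (Fin 2) ℝ :=
  if k % 2 = 1 then sig1 q ^ (-(a k)) else sig2 q ^ (a k)

/-- Suffix product of factors from `k` to `last`. -/
noncomputable def suff (q : ℝ) (a : ℕ → ℤ) (last k : ℕ) : Matrix (Fin 2) (Fin 2) ℝ :=
  if last ≤ k then fac q a k else fac q a k * suff q a last (k + 1)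
termination_by last - k
decreasing_by omega

lemma betaMat_succ (q : ℝ) (a : ℕ → ℤ) (k : ℕ) :
    betaMat q a (k + 1) = betaMat q a k * fac q a (k + 1) := rfl

lemma betaMat_eq_mul_suff (q : ℝ) (a : ℕ → ℤ) (last : ℕ) :
    ∀ d j, j + d + 1 = last → betaMat q a last = betaMat q a j * suff q a last (j + 1) := by
  intro d
  induction d with
  | zero =>
    intro j hj
    subst hj
    rw [betaMat_succ, suff, if_pos (le_refl _)]
  | succ d ih =>
    intro j hj
    have h1 : (j + 1) + d + 1 = last := by omega
    rw [ih (j + 1) h1, betaMat_succ]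
    conv_rhs => rw [suff, if_neg (by omega : ¬ last ≤ j + 1)]
    rw [mul_assoc]

lemma sig1_inv (q : ℝ) (hq : q ≠ 0) : (sig1 q)⁻¹ = !![q, 1; 0, 1] := by
  apply Matrix.inv_eq_right_inv
  ext i j
  fin_cases i <;> fin_cases j <;>
    simp [sig1, Matrix.mul_apply, Fin.sum_univ_two, inv_mul_cancel₀ hq]

lemma pow_R (q : ℝ) (t : ℕ) :
    (!![q, 1; 0, 1] : Matrix (Fin 2) (Fin 2) ℝ) ^ t
      = !![q ^ t, ∑ i ∈ Finset.range t, q ^ i; 0, 1] := by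
  induction t with
  | zero => simp [Matrix.one_fin_two]
  | succ t ih =>
    rw [pow_succ, ih]
    ext i j
    fin_cases i <;> fin_cases j <;>
      simp [Matrix.mul_apply, Fin.sum_univ_two, Finset.sum_range_succ, pow_succ] <;> ring

lemma pow_L (q : ℝ) (t : ℕ) :
    (sig2 q) ^ t = !![1, 0; ∑ i ∈ Finset.range t, (q⁻¹) ^ i, (q⁻¹) ^ t] := by
  induction t with
  | zero => simp [Matrix.one_fin_two]
  | succ t ih =>
    rw [pow_succ, ih]
    ext i j
    fin_cases i <;> fin_cases j <;>
      simp [sig2, Matrix.mul_apply, Fin.sum_univ_two, Finset.sum_range_succ, pow_succ] <;> ring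

lemma fac_odd (q : ℝ) (hq : q ≠ 0) (a : ℕ → ℤ) (k : ℕ) (hk : k % 2 = 1) (ha : 0 ≤ a k) :
    fac q a k = !![q ^ (a k).toNat, qInt q (a k); 0, 1] := by
  rw [fac, if_pos hk]
  have h : a k = ((a k).toNat : ℤ) := (Int.toNat_of_nonneg ha).symm
  rw [h, Matrix.zpow_neg_natCast, ← Matrix.inv_pow', sig1_inv q hq, pow_R, qInt]
  rw [← h]

lemma fac_even (q : ℝ) (a : ℕ → ℤ) (k : ℕ) (hk : k % 2 = 0) (ha : 0 ≤ a k) :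
    fac q a k = !![1, 0; qInt q⁻¹ (a k), (q⁻¹) ^ (a k).toNat] := by
  rw [fac, if_neg (by omega)]
  have h : a k = ((a k).toNat : ℤ) := (Int.toNat_of_nonneg ha).symm
  rw [h, zpow_natCast, pow_L, qInt]
  rw [← h]

lemma qInt_nonneg (q : ℝ) (hq : 0 ≤ q) (m : ℤ) : 0 ≤ qInt q m :=
  Finset.sum_nonneg fun i _ => pow_nonneg hq i

lemma qInt_pos (q : ℝ) (hq : 0 < q) (m : ℤ) (hm : 1 ≤ m) : 0 < qInt q m := by
  apply Finset.sum_pos (fun i _ => pow_pos hq i)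
  exact ⟨0, Finset.mem_range.2 (by omega)⟩

lemma main (q : ℝ) (hq : 0 < q) (n : ℕ) (hn : 1 ≤ n) (a : ℕ → ℤ)
    (h1 : 0 ≤ a 1) (h2 : ∀ i, 2 ≤ i → i ≤ 2 * n → 1 ≤ a i) :
    ∀ d k, k + d = 2 * n → 1 ≤ k →
      0 < ySharp q a (2 * n) k ∧
      (k % 2 = 1 → 0 < suff q a (2 * n) k 1 0 ∧
        suff q a (2 * n) k 0 0 = ySharp q a (2 * n) k * suff q a (2 * n) k 1 0) ∧
      (k % 2 = 0 → 0 < suff q a (2 * n) k 0 0 ∧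
        suff q a (2 * n) k 1 0 = ySharp q a (2 * n) k * suff q a (2 * n) k 0 0) := by
  intro d
  induction d with
  | zero =>
    intro k hk hk1
    have hke : k = 2 * n := by omega
    have hkmod : k % 2 = 0 := by omega
    have hak : 1 ≤ a k := h2 k (by omega) (by omega)
    have hy : ySharp q a (2 * n) k = qInt q⁻¹ (a k) := by
      rw [ySharp, if_pos (by omega)]
    have hs : suff q a (2 * n) k = !![1, 0; qInt q⁻¹ (a k), (q⁻¹) ^ (a k).toNat] := by
      rw [suff, if_pos (by omega), fac_even q a k hkmod (by omega)]
    have hqi : 0 < qInt q⁻¹ (a k) := qInt_pos _ (inv_pos.2 hq) _ hak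
    refine ⟨by rw [hy]; exact hqi, fun h => by omega, fun _ => ?_⟩
    rw [hs, hy]
    norm_num
  | succ d ih =>
    intro k hk hk1
    have hklt : k < 2 * n := by omega
    obtain ⟨hyB, hoddB, hevenB⟩ := ih (k + 1) (by omega) (by omega)
    set B := suff q a (2 * n) (k + 1) with hB
    set yB := ySharp q a (2 * n) (k + 1) with hyBdef
    have hyBne : yB ≠ 0 := ne_of_gt hyB
    have hsuff : suff q a (2 * n) k = fac q a k * B := by
      rw [suff, if_neg (by omega)]
    rcases Nat.even_or_odd k with hkeven | hkodd
    · -- k even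
      have hkmod : k % 2 = 0 := Nat.even_iff.1 hkeven
      have hk2 : 2 ≤ k := by omega
      have hak : 1 ≤ a k := h2 k hk2 (by omega)
      obtain ⟨hB10, hB00eq⟩ := hoddB (by omega)
      have hy : ySharp q a (2 * n) k = qInt q⁻¹ (a k) + q ^ (-(a k)) / yB := by
        rw [ySharp, if_neg (by omega), if_neg (by omega)]
      have hfac := fac_even q a k hkmod (by omega)
      have hs00 : suff q a (2 * n) k 0 0 = B 0 0 := by
        rw [hsuff, hfac, Matrix.mul_apply, Fin.sum_univ_two]
        simp
      have hs10 : suff q a (2 * n) k 1 0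
          = qInt q⁻¹ (a k) * B 0 0 + (q⁻¹) ^ (a k).toNat * B 1 0 := by
        rw [hsuff, hfac, Matrix.mul_apply, Fin.sum_univ_two]
        simp
      have hzp0 : q ^ (a k) = q ^ (a k).toNat := by
        rw [← zpow_natCast q (a k).toNat, Int.toNat_of_nonneg (by omega : (0:ℤ) ≤ a k)]
      have hzp : q ^ (-(a k)) = (q⁻¹) ^ (a k).toNat := by
        rw [_root_.zpow_neg, hzp0, inv_pow]
      have hypos : 0 < ySharp q a (2 * n) k := by
        rw [hy]
        have := qInt_pos _ (inv_pos.2 hq) _ hak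
        have h2' : 0 < q ^ (-(a k)) / yB := div_pos (zpow_pos hq _) hyB
        linarith
      refine ⟨hypos, fun h => by omega, fun _ => ?_⟩
      constructor
      · rw [hs00, hB00eq]; exact mul_pos hyB hB10
      · rw [hs00, hs10, hy, hB00eq, ← hzp]
        field_simp
    · -- k odd
      have hkmod : k % 2 = 1 := Nat.odd_iff.1 hkodd
      have hak : 0 ≤ a k := by
        rcases Nat.eq_or_lt_of_le hk1 with h | h
        · rw [← h]; exact h1
        · exact le_trans (by norm_num) (h2 k (by omega) (by omega))
      obtain ⟨hB00, hB10eq⟩ := hevenB (by omega)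
      have hy : ySharp q a (2 * n) k = qInt q (a k) + q ^ (a k) / yB := by
        rw [ySharp, if_neg (by omega), if_pos hkmod]
      have hfac := fac_odd q (ne_of_gt hq) a k hkmod hak
      have hs00 : suff q a (2 * n) k 0 0
          = q ^ (a k).toNat * B 0 0 + qInt q (a k) * B 1 0 := by
        rw [hsuff, hfac, Matrix.mul_apply, Fin.sum_univ_two]
        simp
      have hs10 : suff q a (2 * n) k 1 0 = B 1 0 := by
        rw [hsuff, hfac, Matrix.mul_apply, Fin.sum_univ_two]
        simp
      have hzp : q ^ (a k) = q ^ (a k).toNat := by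
        rw [← zpow_natCast q (a k).toNat, Int.toNat_of_nonneg hak]
      have hypos : 0 < ySharp q a (2 * n) k := by
        rw [hy]
        have := qInt_nonneg q (le_of_lt hq) (a k)
        have h2' : 0 < q ^ (a k) / yB := div_pos (zpow_pos hq _) hyB
        linarith
      refine ⟨hypos, fun _ => ?_, fun h => by omega⟩
      constructor
      · rw [hs10, hB10eq]; exact mul_pos hyB hB00
      · rw [hs00, hs10, hy, hB10eq, ← hzp]
        field_simp
        ring

end SharpAux

/-- q-deformed continued fraction formula for right q-rationals:
for a positive even continued form a and q > 0, all y_k (2 ≤ k ≤ 2n) are positive, the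
(2,1) entry of β(a, q) is positive, and the Möbius image of ∞ under β(a, q) equals y₁. -/
theorem sharp_continued_fraction_formula (q : ℝ) (hq : 0 < q) (n : ℕ) (hn : 1 ≤ n)
    (a : ℕ → ℤ) (h1 : 0 ≤ a 1) (h2 : ∀ i, 2 ≤ i → i ≤ 2 * n → 1 ≤ a i) :
    (∀ k, 2 ≤ k → k ≤ 2 * n → 0 < ySharp q a (2 * n) k) ∧
    0 < betaMat q a (2 * n) 1 0 ∧
    betaMat q a (2 * n) 0 0 / betaMat q a (2 * n) 1 0 = ySharp q a (2 * n) 1 := by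
  have hbeta : betaMat q a (2 * n) = SharpAux.suff q a (2 * n) 1 := by
    have := SharpAux.betaMat_eq_mul_suff q a (2 * n) (2 * n - 1) 0 (by omega)
    rw [this]
    show (1 : Matrix (Fin 2) (Fin 2) ℝ) * _ = _
    rw [one_mul]
  have hmain := SharpAux.main q hq n hn a h1 h2
  refine ⟨fun k hk2 hk2n => (hmain (2 * n - k) k (by omega) (by omega)).1, ?_, ?_⟩
  · obtain ⟨-, hodd, -⟩ := hmain (2 * n - 1) 1 (by omega) le_rfl
    rw [hbeta]
    exact (hodd rfl).1
  · obtain ⟨-, hodd, -⟩ := hmain (2 * n - 1) 1 (by omega) le_rfl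
    obtain ⟨hpos, heq⟩ := hodd rfl
    rw [hbeta, heq]
    exact mul_div_cancel_right₀ _ (ne_of_gt hpos)
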